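/- For α > 0 define L_α(x,y) = (cos x·cos αy, cos x·sin αy, sin x·cos y, sin x·sin y), G(x) = α²·cos²x + sin²x, and n(x,y) = G(x)^{−1/2}·( sin x·sin αy, −sin x·cos αy, −α·cos x·sin y, α·cos x·cos y ). Then: (i) ⟨L_α, L_α⟩ = 1, ⟨(L_α)_x, (L_α)_x⟩ = 1, ⟨(L_α)_y, (L_α)_y⟩ = G(x), ⟨(L_α)_x, (L_α)_y⟩ = 0; (ii) ⟨n,n⟩ = 1 and n is orthogonal to L_α, (L_α)_x, (L_α)_y; (iii) G(x)·⟨(L_α)_{xx}, n⟩ + ⟨(L_α)_{yy}, n⟩ = 0, so L_α parametrizes a minimal surface in S³; and (iv) the Gauss curvature of the metric dx² + G(x)·dy², namely K(x) = −G''(x)/(2G(x)) + G'(x)²/(4G(x)²), equals 1 − α²/(α²·cos²x + sin²x)², which is non-constant whenever α ≠ 1. -/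

import Mathlib

open Real
open scoped InnerProductSpace

noncomputable section

/-- ℝ⁴ with the standard Euclidean inner product. -/
abbrev E4 := EuclideanSpace ℝ (Fin 4)

/-- Partial derivative with respect to the first parameter. -/
def pu {F : Type*} [NormedAddCommGroup F] [NormedSpace ℝ F]
    (f : ℝ × ℝ → F) (p : ℝ × ℝ) : F := fderiv ℝ f p (1, 0)

/-- Partial derivative with respect to the second parameter. -/
def pv {F : Type*} [NormedAddCommGroup F] [NormedSpace ℝ F]
    (f : ℝ × ℝ → F) (p : ℝ × ℝ) : F := fderiv ℝ f p (0, 1)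

/-- The Lawson torus parametrization
`L_α(x,y) = (cos x·cos αy, cos x·sin αy, sin x·cos y, sin x·sin y)`. -/
def Lawson (α : ℝ) (q : ℝ × ℝ) : E4 :=
  (WithLp.equiv 2 (Fin 4 → ℝ)).symm
    ![Real.cos q.1 * Real.cos (α * q.2), Real.cos q.1 * Real.sin (α * q.2),
      Real.sin q.1 * Real.cos q.2, Real.sin q.1 * Real.sin q.2]

/-- `G(x) = α²·cos²x + sin²x`. -/
def Gmetric (α x : ℝ) : ℝ := α ^ 2 * Real.cos x ^ 2 + Real.sin x ^ 2

/-- The unit normal of the Lawson torus: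
`n(x,y) = G(x)^{−1/2}·(sin x·sin αy, −sin x·cos αy, −α cos x·sin y, α cos x·cos y)`. -/
def nL (α : ℝ) (q : ℝ × ℝ) : E4 :=
  (1 / Real.sqrt (Gmetric α q.1)) • (WithLp.equiv 2 (Fin 4 → ℝ)).symm
    ![Real.sin q.1 * Real.sin (α * q.2), -(Real.sin q.1 * Real.cos (α * q.2)),
      -(α * Real.cos q.1 * Real.sin q.2), α * Real.cos q.1 * Real.cos q.2]

/-!
Each coordinate of `L_α(x, y)` is a product `f i x * g i y`, so its partial derivatives of all
orders are again such products, computed factor by factor; every identity in (i)–(iii) is then a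
trigonometric polynomial identity modulo `sin² + cos² = 1`. For (iv), `G`, `G'²` and `G''` are
polynomials in `cos² x`, which makes `K = 1 - α²/G²` a rational identity; comparing
`K(0) = 1 - α⁻²` with `K(π/2) = 1 - α²` forces `α⁴ = 1`.
-/

open WithLp

section Separable

variable {ι : Type*} [Fintype ι] {f g : ι → ℝ → ℝ} {f' g' : ι → ℝ} {q : ℝ × ℝ}

theorem hasFDerivAt_toLp_separable (hf : ∀ i, HasDerivAt (f i) (f' i) q.1)
    (hg : ∀ i, HasDerivAt (g i) (g' i) q.2) :
    HasFDerivAt (fun p : ℝ × ℝ => toLp 2 fun i => f i p.1 * g i p.2)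
      ((PiLp.continuousLinearEquiv 2 ℝ (fun _ : ι => ℝ)).symm.toContinuousLinearMap.comp
        (ContinuousLinearMap.pi fun i =>
          f i q.1 • g' i • ContinuousLinearMap.snd ℝ ℝ ℝ
            + g i q.2 • f' i • ContinuousLinearMap.fst ℝ ℝ ℝ)) q :=
  (PiLp.hasFDerivAt_toLp 2 _).comp q <| hasFDerivAt_pi.2 fun i =>
    ((hf i).comp_hasFDerivAt q hasFDerivAt_fst).mul ((hg i).comp_hasFDerivAt q hasFDerivAt_snd)

theorem pu_toLp_separable (hf : ∀ i, HasDerivAt (f i) (f' i) q.1)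
    (hg : ∀ i, HasDerivAt (g i) (g' i) q.2) :
    pu (fun p : ℝ × ℝ => toLp 2 fun i => f i p.1 * g i p.2) q =
      toLp 2 fun i => f' i * g i q.2 := by
  rw [pu, (hasFDerivAt_toLp_separable hf hg).fderiv]
  ext i
  simp [mul_comm]

theorem pv_toLp_separable (hf : ∀ i, HasDerivAt (f i) (f' i) q.1)
    (hg : ∀ i, HasDerivAt (g i) (g' i) q.2) :
    pv (fun p : ℝ × ℝ => toLp 2 fun i => f i p.1 * g i p.2) q =
      toLp 2 fun i => f i q.1 * g' i := by
  rw [pv, (hasFDerivAt_toLp_separable hf hg).fderiv]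
  ext i
  simp

end Separable

def lawsonX : Fin 4 → ℝ → ℝ := ![cos, cos, sin, sin]
def lawsonX' : Fin 4 → ℝ → ℝ := ![fun x => -sin x, fun x => -sin x, cos, cos]
def lawsonX'' : Fin 4 → ℝ → ℝ :=
  ![fun x => -cos x, fun x => -cos x, fun x => -sin x, fun x => -sin x]
def lawsonY (α : ℝ) : Fin 4 → ℝ → ℝ :=
  ![fun y => cos (α * y), fun y => sin (α * y), cos, sin]
def lawsonY' (α : ℝ) : Fin 4 → ℝ → ℝ :=
  ![fun y => -(α * sin (α * y)), fun y => α * cos (α * y), fun y => -sin y, cos]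
def lawsonY'' (α : ℝ) : Fin 4 → ℝ → ℝ :=
  ![fun y => -(α ^ 2 * cos (α * y)), fun y => -(α ^ 2 * sin (α * y)), fun y => -cos y,
    fun y => -sin y]

theorem hasDerivAt_lawsonX (x : ℝ) (i : Fin 4) : HasDerivAt (lawsonX i) (lawsonX' i x) x := by
  fin_cases i
  exacts [hasDerivAt_cos x, hasDerivAt_cos x, hasDerivAt_sin x, hasDerivAt_sin x]

theorem hasDerivAt_lawsonX' (x : ℝ) (i : Fin 4) : HasDerivAt (lawsonX' i) (lawsonX'' i x) x := by
  fin_cases i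
  exacts [(hasDerivAt_sin x).neg, (hasDerivAt_sin x).neg, hasDerivAt_cos x, hasDerivAt_cos x]

theorem hasDerivAt_cos_mul (α y : ℝ) :
    HasDerivAt (fun y => cos (α * y)) (-(α * sin (α * y))) y :=
  (((hasDerivAt_id' y).const_mul α).cos).congr_deriv (by ring)

theorem hasDerivAt_sin_mul (α y : ℝ) :
    HasDerivAt (fun y => sin (α * y)) (α * cos (α * y)) y :=
  (((hasDerivAt_id' y).const_mul α).sin).congr_deriv (by ring)

theorem hasDerivAt_lawsonY (α y : ℝ) (i : Fin 4) :
    HasDerivAt (lawsonY α i) (lawsonY' α i y) y := by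
  fin_cases i
  exacts [hasDerivAt_cos_mul α y, hasDerivAt_sin_mul α y, hasDerivAt_cos y, hasDerivAt_sin y]

theorem hasDerivAt_lawsonY' (α y : ℝ) (i : Fin 4) :
    HasDerivAt (lawsonY' α i) (lawsonY'' α i y) y := by
  fin_cases i
  exacts [((hasDerivAt_sin_mul α y).const_mul α).neg.congr_deriv
      (by ring : _ = -(α ^ 2 * cos (α * y))),
    ((hasDerivAt_cos_mul α y).const_mul α).congr_deriv (by ring : _ = -(α ^ 2 * sin (α * y))),
    (hasDerivAt_sin y).neg, hasDerivAt_cos y]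

theorem Gmetric_pos {α : ℝ} (hα : α ≠ 0) (x : ℝ) : 0 < Gmetric α x := by
  rcases eq_or_ne (cos x) 0 with hc | hc
  · simp [Gmetric, hc, sin_sq]
  · unfold Gmetric; positivity

theorem lawson_eq_separable (α : ℝ) :
    Lawson α = fun p => toLp 2 fun i => lawsonX i p.1 * lawsonY α i p.2 := by
  funext p
  simp only [Lawson, WithLp.equiv_symm_apply]
  congr 1
  funext i
  fin_cases i <;> rfl

theorem pu_lawson (α : ℝ) :
    pu (Lawson α) = fun q => toLp 2 fun i => lawsonX' i q.1 * lawsonY α i q.2 := by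
  funext q
  rw [lawson_eq_separable]
  exact pu_toLp_separable (hasDerivAt_lawsonX q.1) (hasDerivAt_lawsonY α q.2)

theorem pv_lawson (α : ℝ) :
    pv (Lawson α) = fun q => toLp 2 fun i => lawsonX i q.1 * lawsonY' α i q.2 := by
  funext q
  rw [lawson_eq_separable]
  exact pv_toLp_separable (hasDerivAt_lawsonX q.1) (hasDerivAt_lawsonY α q.2)

theorem pu_pu_lawson (α : ℝ) (q : ℝ × ℝ) :
    pu (pu (Lawson α)) q = toLp 2 fun i => lawsonX'' i q.1 * lawsonY α i q.2 := by
  rw [pu_lawson]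
  exact pu_toLp_separable (hasDerivAt_lawsonX' q.1) (hasDerivAt_lawsonY α q.2)

theorem pv_pv_lawson (α : ℝ) (q : ℝ × ℝ) :
    pv (pv (Lawson α)) q = toLp 2 fun i => lawsonX i q.1 * lawsonY'' α i q.2 := by
  rw [pv_lawson]
  exact pv_toLp_separable (hasDerivAt_lawsonX q.1) (hasDerivAt_lawsonY' α q.2)

theorem inner_toLp_fin_four (a b : Fin 4 → ℝ) :
    ⟪toLp 2 a, toLp 2 b⟫_ℝ = a 0 * b 0 + a 1 * b 1 + a 2 * b 2 + a 3 * b 3 := by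
  simp only [EuclideanSpace.inner_toLp_toLp, dotProduct, Fin.sum_univ_four, star_trivial]
  ring

section Lawson

variable (α : ℝ) (q : ℝ × ℝ)

theorem inner_lawson_self : ⟪Lawson α q, Lawson α q⟫_ℝ = 1 := by
  simp only [Matrix.cons_val, lawson_eq_separable, inner_toLp_fin_four, lawsonX, lawsonY]
  linear_combination cos q.1 ^ 2 * sin_sq_add_cos_sq (α * q.2)
      + sin q.1 ^ 2 * sin_sq_add_cos_sq q.2 + sin_sq_add_cos_sq q.1

theorem inner_pu_lawson_self : ⟪pu (Lawson α) q, pu (Lawson α) q⟫_ℝ = 1 := by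
  simp only [Matrix.cons_val, pu_lawson, inner_toLp_fin_four, lawsonX', lawsonY]
  linear_combination sin q.1 ^ 2 * sin_sq_add_cos_sq (α * q.2)
      + cos q.1 ^ 2 * sin_sq_add_cos_sq q.2 + sin_sq_add_cos_sq q.1

theorem inner_pv_lawson_self : ⟪pv (Lawson α) q, pv (Lawson α) q⟫_ℝ = Gmetric α q.1 := by
  simp only [Matrix.cons_val, pv_lawson, inner_toLp_fin_four, lawsonX, lawsonY', Gmetric]
  linear_combination α ^ 2 * cos q.1 ^ 2 * sin_sq_add_cos_sq (α * q.2)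
      + sin q.1 ^ 2 * sin_sq_add_cos_sq q.2

theorem inner_pu_pv_lawson : ⟪pu (Lawson α) q, pv (Lawson α) q⟫_ℝ = 0 := by
  simp only [Matrix.cons_val, pu_lawson, pv_lawson, inner_toLp_fin_four, lawsonX, lawsonX',
    lawsonY, lawsonY']
  ring

theorem inner_nL_self (hα : α ≠ 0) : ⟪nL α q, nL α q⟫_ℝ = 1 := by
  have hG : 0 < Gmetric α q.1 := Gmetric_pos hα q.1
  simp only [Matrix.cons_val, nL, WithLp.equiv_symm_apply,
    real_inner_smul_left, real_inner_smul_right, inner_toLp_fin_four]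
  have hsq : √(Gmetric α q.1) ^ 2 = Gmetric α q.1 := sq_sqrt hG.le
  field_simp
  rw [hsq, Gmetric]
  linear_combination sin q.1 ^ 2 * sin_sq_add_cos_sq (α * q.2)
      + α ^ 2 * cos q.1 ^ 2 * sin_sq_add_cos_sq q.2

theorem inner_nL_lawson : ⟪nL α q, Lawson α q⟫_ℝ = 0 := by
  simp only [Matrix.cons_val, nL, WithLp.equiv_symm_apply,
    lawson_eq_separable, real_inner_smul_left, inner_toLp_fin_four, lawsonX, lawsonY]
  ring

theorem inner_nL_pu_lawson : ⟪nL α q, pu (Lawson α) q⟫_ℝ = 0 := by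
  simp only [Matrix.cons_val, nL, WithLp.equiv_symm_apply,
    pu_lawson, real_inner_smul_left, inner_toLp_fin_four, lawsonX', lawsonY]
  ring

theorem inner_nL_pv_lawson : ⟪nL α q, pv (Lawson α) q⟫_ℝ = 0 := by
  simp only [Matrix.cons_val, nL, WithLp.equiv_symm_apply,
    pv_lawson, real_inner_smul_left, inner_toLp_fin_four, lawsonX, lawsonY']
  linear_combination (√(Gmetric α q.1))⁻¹ * α * sin q.1 * cos q.1 *
    (sin_sq_add_cos_sq q.2 - sin_sq_add_cos_sq (α * q.2))

theorem lawson_minimal :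
    Gmetric α q.1 * ⟪pu (pu (Lawson α)) q, nL α q⟫_ℝ
      + ⟪pv (pv (Lawson α)) q, nL α q⟫_ℝ = 0 := by
  simp only [Matrix.cons_val, nL, WithLp.equiv_symm_apply, pu_pu_lawson, pv_pv_lawson,
    real_inner_smul_right, inner_toLp_fin_four, lawsonX, lawsonX'', lawsonY, lawsonY'', Gmetric]
  ring

end Lawson

/-- The Gauss curvature of the metric `dx² + G(x) dy²`. -/
def gaussCurvature (G : ℝ → ℝ) (x : ℝ) : ℝ :=
  -(deriv (deriv G) x) / (2 * G x) + (deriv G x) ^ 2 / (4 * (G x) ^ 2)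

theorem deriv_Gmetric (α : ℝ) :
    deriv (Gmetric α) = fun x => 2 * (1 - α ^ 2) * (sin x * cos x) :=
  funext fun x => ((((hasDerivAt_cos x).pow 2).const_mul (α ^ 2)).add
    ((hasDerivAt_sin x).pow 2)).deriv.trans (by ring)

theorem deriv_deriv_Gmetric (α x : ℝ) :
    deriv (deriv (Gmetric α)) x = 2 * (1 - α ^ 2) * (cos x ^ 2 - sin x ^ 2) := by
  rw [deriv_Gmetric]
  exact (((hasDerivAt_sin x).mul (hasDerivAt_cos x)).const_mul _).deriv.trans (by ring)

theorem gaussCurvature_Gmetric {α : ℝ} (hα : α ≠ 0) (x : ℝ) :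
    gaussCurvature (Gmetric α) x = 1 - α ^ 2 / Gmetric α x ^ 2 := by
  have hG := (Gmetric_pos hα x).ne'
  have hG₀ : Gmetric α x = 1 - (1 - α ^ 2) * cos x ^ 2 := by
    rw [Gmetric]; linear_combination sin_sq_add_cos_sq x
  have hG₁ : deriv (Gmetric α) x ^ 2 = 4 * (1 - α ^ 2) ^ 2 * (1 - cos x ^ 2) * cos x ^ 2 := by
    rw [deriv_Gmetric]; linear_combination 4 * (1 - α ^ 2) ^ 2 * cos x ^ 2 * sin_sq_add_cos_sq x
  have hG₂ : deriv (deriv (Gmetric α)) x = 2 * (1 - α ^ 2) * (2 * cos x ^ 2 - 1) := by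
    rw [deriv_deriv_Gmetric]; linear_combination -2 * (1 - α ^ 2) * sin_sq_add_cos_sq x
  rw [gaussCurvature, hG₁, hG₂]
  rw [hG₀] at hG ⊢
  field_simp
  ring

theorem gaussCurvature_Gmetric_not_constant {α : ℝ} (hα : 0 < α) (h1 : α ≠ 1) :
    ¬ ∃ c : ℝ, ∀ x : ℝ, gaussCurvature (Gmetric α) x = c := by
  rintro ⟨c, hc⟩
  have h := (hc 0).trans (hc (π / 2)).symm
  norm_num [gaussCurvature_Gmetric hα.ne', Gmetric] at h
  have h4 : α ^ 4 = 1 := by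
    have hα₀ := hα.ne'
    field_simp at h
    exact h.symm
  exact h1 ((pow_eq_one_iff_of_nonneg hα.le (by norm_num)).1 h4)

/-- (i) `L_α` is an orthogonal parametrization of a surface in `S³` with
first fundamental form `dx² + G(x)dy²`; (ii) `nL` is a unit normal; (iii) `L_α` is minimal
in `S³`: `G·⟨(L_α)_{xx}, n⟩ + ⟨(L_α)_{yy}, n⟩ = 0`; (iv) the Gauss curvature of
`dx² + G(x)dy²` equals `1 − α²/(α²cos²x + sin²x)²`, non-constant whenever `α ≠ 1`. -/
theorem stmt_19 (α : ℝ) (hα : 0 < α) :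
    (∀ q : ℝ × ℝ,
      ⟪Lawson α q, Lawson α q⟫_ℝ = 1 ∧
      ⟪pu (Lawson α) q, pu (Lawson α) q⟫_ℝ = 1 ∧
      ⟪pv (Lawson α) q, pv (Lawson α) q⟫_ℝ = Gmetric α q.1 ∧
      ⟪pu (Lawson α) q, pv (Lawson α) q⟫_ℝ = 0) ∧
    (∀ q : ℝ × ℝ,
      ⟪nL α q, nL α q⟫_ℝ = 1 ∧
      ⟪nL α q, Lawson α q⟫_ℝ = 0 ∧
      ⟪nL α q, pu (Lawson α) q⟫_ℝ = 0 ∧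
      ⟪nL α q, pv (Lawson α) q⟫_ℝ = 0) ∧
    (∀ q : ℝ × ℝ,
      Gmetric α q.1 * ⟪pu (pu (Lawson α)) q, nL α q⟫_ℝ
        + ⟪pv (pv (Lawson α)) q, nL α q⟫_ℝ = 0) ∧
    (∀ x : ℝ,
      -(deriv (deriv (Gmetric α)) x) / (2 * Gmetric α x)
        + (deriv (Gmetric α) x) ^ 2 / (4 * (Gmetric α x) ^ 2) =
      1 - α ^ 2 / (α ^ 2 * Real.cos x ^ 2 + Real.sin x ^ 2) ^ 2) ∧
    (α ≠ 1 → ¬ ∃ c : ℝ, ∀ x : ℝ,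
      -(deriv (deriv (Gmetric α)) x) / (2 * Gmetric α x)
        + (deriv (Gmetric α) x) ^ 2 / (4 * (Gmetric α x) ^ 2) = c) :=
  ⟨fun q => ⟨inner_lawson_self α q, inner_pu_lawson_self α q, inner_pv_lawson_self α q,
      inner_pu_pv_lawson α q⟩,
    fun q => ⟨inner_nL_self α q hα.ne', inner_nL_lawson α q, inner_nL_pu_lawson α q,
      inner_nL_pv_lawson α q⟩,
    lawson_minimal α,
    gaussCurvature_Gmetric hα.ne',
    fun h1 => gaussCurvature_Gmetric_not_constant hα h1⟩
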